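/- On S³×S³ define the metric g(Z,Z') = (4/3)(⟨U,U'⟩ + ⟨V,V'⟩) - (2/3)(⟨p⁻¹U, q⁻¹V'⟩ + ⟨p⁻¹U', q⁻¹V⟩) for tangent vectors Z = (U,V), Z' = (U',V') at (p,q), where ⟨·,·⟩ is the Euclidean inner product on ℍ ≅ ℝ⁴. Then g is compatible with J, i.e., g(JZ, JZ') = g(Z,Z') for all tangent vectors Z, Z', where JZ = (1/√3)(2pq⁻¹V - U, -2qp⁻¹U + V). -/

import Mathlib

open RealInnerProductSpace

noncomputable def nkJ (p q : Quaternion ℝ) (Z : Quaternion ℝ × Quaternion ℝ) :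
    Quaternion ℝ × Quaternion ℝ :=
  (Real.sqrt 3)⁻¹ • (2 • (p * q⁻¹ * Z.2) - Z.1, -(2 • (q * p⁻¹ * Z.1)) + Z.2)

noncomputable def nkMetric (p q : Quaternion ℝ)
    (Z Z' : Quaternion ℝ × Quaternion ℝ) : ℝ :=
  (4/3) * (⟪Z.1, Z'.1⟫ + ⟪Z.2, Z'.2⟫)
    - (2/3) * (⟪p⁻¹ * Z.1, q⁻¹ * Z'.2⟫ + ⟪p⁻¹ * Z'.1, q⁻¹ * Z.2⟫)

/-!
Left-trivialise the tangent space of `S³ × S³` at `(p, q)` by `(U, V) ↦ (p⁻¹U, q⁻¹V)`.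
Left multiplication by a unit quaternion is an isometry of `ℍ`, so in this frame `g` becomes
the constant form `(4/3)(⟨u,u'⟩ + ⟨v,v'⟩) - (2/3)(⟨u,v'⟩ + ⟨u',v⟩)` and `J` the constant map
`(u, v) ↦ (2v - u, -2u + v) / √3`. Invariance is then the identity `AᵀGA = G` for the
`2 × 2` matrices `G = [[4, -2], [-2, 4]] / 3` and `A = [[-1, 2], [-2, 1]] / √3`.
-/

section ConstantForm

variable {E : Type*} [NormedAddCommGroup E] [InnerProductSpace ℝ E]

noncomputable def nkForm (Z Z' : E × E) : ℝ :=
  (4/3) * (⟪Z.1, Z'.1⟫ + ⟪Z.2, Z'.2⟫) - (2/3) * (⟪Z.1, Z'.2⟫ + ⟪Z'.1, Z.2⟫)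

noncomputable def nkJ₀ (Z : E × E) : E × E :=
  (Real.sqrt 3)⁻¹ • (2 • Z.2 - Z.1, -(2 • Z.1) + Z.2)

theorem nkForm_nkJ₀ (Z Z' : E × E) : nkForm (nkJ₀ Z) (nkJ₀ Z') = nkForm Z Z' := by
  obtain ⟨u, v⟩ := Z
  obtain ⟨u', v'⟩ := Z'
  have hs : (Real.sqrt 3)⁻¹ * (Real.sqrt 3)⁻¹ = 1 / 3 := by
    rw [← mul_inv, Real.mul_self_sqrt (by norm_num)]; norm_num
  simp only [nkForm, nkJ₀, Prod.smul_mk, real_inner_smul_left, real_inner_smul_right,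
    inner_sub_left, inner_sub_right, inner_add_left, inner_add_right, inner_neg_left,
    inner_neg_right, two_nsmul]
  rw [real_inner_comm u u', real_inner_comm v v', real_inner_comm u v', real_inner_comm u' v]
  linear_combination (4 * ⟪u, u'⟫ + 4 * ⟪v, v'⟫ - 2 * ⟪u, v'⟫ - 2 * ⟪u', v⟫) * hs

end ConstantForm

theorem Quaternion.inner_mul_left_of_norm_eq_one {u : Quaternion ℝ} (hu : ‖u‖ = 1)
    (x y : Quaternion ℝ) : ⟪u * x, u * y⟫ = ⟪x, y⟫ :=
  (⟨LinearMap.mulLeft ℝ u, fun z => by simp [norm_mul, hu]⟩ :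
    Quaternion ℝ →ₗᵢ[ℝ] Quaternion ℝ).inner_map_map x y

noncomputable def leftTrivialize (p q : Quaternion ℝ) (Z : Quaternion ℝ × Quaternion ℝ) :
    Quaternion ℝ × Quaternion ℝ :=
  (p⁻¹ * Z.1, q⁻¹ * Z.2)

theorem nkMetric_eq_nkForm {p q : Quaternion ℝ} (hp : ‖p‖ = 1) (hq : ‖q‖ = 1)
    (Z Z' : Quaternion ℝ × Quaternion ℝ) :
    nkMetric p q Z Z' = nkForm (leftTrivialize p q Z) (leftTrivialize p q Z') := by
  have hp' : ‖p⁻¹‖ = 1 := by rw [norm_inv, hp, inv_one]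
  have hq' : ‖q⁻¹‖ = 1 := by rw [norm_inv, hq, inv_one]
  simp only [nkMetric, nkForm, leftTrivialize, Quaternion.inner_mul_left_of_norm_eq_one hp',
    Quaternion.inner_mul_left_of_norm_eq_one hq']

theorem leftTrivialize_nkJ {p q : Quaternion ℝ} (hp : p ≠ 0) (hq : q ≠ 0)
    (Z : Quaternion ℝ × Quaternion ℝ) :
    leftTrivialize p q (nkJ p q Z) = nkJ₀ (leftTrivialize p q Z) := by
  simp only [leftTrivialize, nkJ, nkJ₀, Prod.smul_mk, mul_smul_comm, mul_sub, mul_add, mul_neg,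
    mul_assoc, inv_mul_cancel_left₀ hp, inv_mul_cancel_left₀ hq]

theorem stmt_13 (p q : Quaternion ℝ) (hp : ‖p‖ = 1) (hq : ‖q‖ = 1)
    (Z Z' : Quaternion ℝ × Quaternion ℝ) :
    nkMetric p q (nkJ p q Z) (nkJ p q Z') = nkMetric p q Z Z' := by
  have hp0 : p ≠ 0 := norm_ne_zero_iff.mp (by simp [hp])
  have hq0 : q ≠ 0 := norm_ne_zero_iff.mp (by simp [hq])
  rw [nkMetric_eq_nkForm hp hq, nkMetric_eq_nkForm hp hq, leftTrivialize_nkJ hp0 hq0,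
    leftTrivialize_nkJ hp0 hq0, nkForm_nkJ₀]
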